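/- For every permutation w ∈ S_n and every subsequence T of the λ-chain Γ, the content vector of the filling f(w,T) is congruent to w(μ(T)) modulo the line ℝ(1,…,1) ⊂ ℝⁿ. In particular, w(μ(T)) depends only on the filling f(w,T). -/

import Mathlib

open Finset

namespace Compress

attribute [local instance] Classical.propDecidable

noncomputable section

/-! ### Permutations of `{1,…,n}`, 1-based conventions -/

/-- The 1-based index `i ∈ {1,…,n}` as an element of `Fin n`. -/
def idx (n : ℕ) [NeZero n] (i : ℕ) : Fin n :=
  ⟨(i - 1) % n, Nat.mod_lt _ (Nat.pos_of_ne_zero (NeZero.ne n))⟩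

/-- The 1-based value `w(i) ∈ {1,…,n}` of a permutation `w ∈ S_n`. -/
def pv {n : ℕ} [NeZero n] (w : Equiv.Perm (Fin n)) (i : ℕ) : ℕ :=
  (w (idx n i)).val + 1

/-- The transposition `(i,k)` of `{1,…,n}` (1-based). -/
def tr (n : ℕ) [NeZero n] (i k : ℕ) : Equiv.Perm (Fin n) :=
  Equiv.swap (idx n i) (idx n k)

/-- The Coxeter length of `w ∈ S_n`, i.e. its number of inversions. -/
def len {n : ℕ} [NeZero n] (w : Equiv.Perm (Fin n)) : ℕ :=
  ((Finset.univ : Finset (Fin n × Fin n)).filter fun p => p.1 < p.2 ∧ w p.2 < w p.1).card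

/-- Right multiplication of `w` by a list of transpositions (given as 1-based pairs),
taken from left to right. -/
def applyTs {n : ℕ} [NeZero n] (w : Equiv.Perm (Fin n)) (L : List (ℕ × ℕ)) :
    Equiv.Perm (Fin n) :=
  L.foldl (fun u p => u * tr n p.1 p.2) w

/-! ### Subsequences of a list of transpositions, encoded by sets of positions -/

/-- The subsequence of the list `Δ` of transpositions occupying the (0-based) positions in `J`,
listed in increasing order of positions. -/
def pickP (Δ : List (ℕ × ℕ)) (J : Finset ℕ) : List (ℕ × ℕ) :=
  (J.sort (· ≤ ·)).map fun r => Δ.getD r (0, 0)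

/-- `w r_1 ⋯ r_s` where `r_1,…,r_s` is the subsequence of `Δ` at positions `J`. -/
def wT {n : ℕ} [NeZero n] (w : Equiv.Perm (Fin n)) (Δ : List (ℕ × ℕ)) (J : Finset ℕ) :
    Equiv.Perm (Fin n) :=
  applyTs w (pickP Δ J)

/-- The partial product `w r_1 ⋯ r_{a-1}` just before using the entry at position `r ∈ J`. -/
def stepPerm {n : ℕ} [NeZero n] (w : Equiv.Perm (Fin n)) (Δ : List (ℕ × ℕ)) (J : Finset ℕ)
    (r : ℕ) : Equiv.Perm (Fin n) :=
  applyTs w (pickP Δ (J.filter fun x => x < r))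

/-- The entry at position `r ∈ J` is positive in the increasing-length convention:
`ℓ(w r_1⋯r_{a−1}) < ℓ(w r_1⋯r_a)`. -/
def isPosInc {n : ℕ} [NeZero n] (w : Equiv.Perm (Fin n)) (Δ : List (ℕ × ℕ)) (J : Finset ℕ)
    (r : ℕ) : Prop :=
  len (stepPerm w Δ J r) <
    len (stepPerm w Δ J r * tr n (Δ.getD r (0, 0)).1 (Δ.getD r (0, 0)).2)

/-- The entry at position `r ∈ J` is positive in the decreasing-length convention
(a positive folding): `ℓ(w r_1⋯r_{a−1}) > ℓ(w r_1⋯r_a)`. -/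
def isPosDec {n : ℕ} [NeZero n] (w : Equiv.Perm (Fin n)) (Δ : List (ℕ × ℕ)) (J : Finset ℕ)
    (r : ℕ) : Prop :=
  len (stepPerm w Δ J r * tr n (Δ.getD r (0, 0)).1 (Δ.getD r (0, 0)).2) <
    len (stepPerm w Δ J r)

/-! ### The field `ℚ(q,t)` -/

/-- The field `ℚ(q,t)` of rational functions in two variables. -/
abbrev Kqt : Type := FractionRing (MvPolynomial (Fin 2) ℚ)

/-- The variable `q` of `ℚ(q,t)`. -/
def qq : Kqt := algebraMap (MvPolynomial (Fin 2) ℚ) Kqt (MvPolynomial.X 0)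

/-- The variable `t` of `ℚ(q,t)`. -/
def tt : Kqt := algebraMap (MvPolynomial (Fin 2) ℚ) Kqt (MvPolynomial.X 1)

/-! ### The partition λ, its diagram and statistics on fillings -/

/-- `conj n lam j = λ'_j`, the length of column `j`. -/
def conj (n : ℕ) (lam : ℕ → ℕ) (j : ℕ) : ℕ :=
  ((Finset.Icc 1 (n - 1)).filter fun i => j ≤ lam i).card

/-- The cells `(i,j)` of the Young diagram of λ: `1 ≤ i ≤ n−1`, `1 ≤ j ≤ λ_i`. -/
def cells (n : ℕ) (lam : ℕ → ℕ) : Finset (ℕ × ℕ) :=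
  (Finset.Icc 1 (n - 1) ×ˢ Finset.Icc 1 (lam 1)).filter fun c => c.2 ≤ lam c.1

/-- Two cells attack each other: same column, or consecutive columns with the
left-column cell strictly above the right-column cell (column `j+1` is left of column `j`). -/
def attack (u v : ℕ × ℕ) : Prop :=
  (u.2 = v.2 ∧ u.1 ≠ v.1) ∨ (u.2 = v.2 + 1 ∧ u.1 < v.1) ∨ (v.2 = u.2 + 1 ∧ v.1 < u.1)

/-- `u` comes before `v` in the reading order (columns right to left, i.e. column 1 first,
each column top to bottom). -/
def readBefore (u v : ℕ × ℕ) : Prop :=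
  u.2 < v.2 ∨ (u.2 = v.2 ∧ u.1 < v.1)

/-- σ is a nonattacking filling of λ with entries in `{1,…,n}`, i.e. `σ ∈ T(λ,n)`. -/
def NonAttacking (n : ℕ) (lam : ℕ → ℕ) (σ : ℕ × ℕ → ℕ) : Prop :=
  (∀ u ∈ cells n lam, σ u ∈ Finset.Icc 1 n) ∧
    ∀ u ∈ cells n lam, ∀ v ∈ cells n lam, attack u v → σ u ≠ σ v

/-- The descent set of a filling. -/
def DesSet (n : ℕ) (lam : ℕ → ℕ) (σ : ℕ × ℕ → ℕ) : Finset (ℕ × ℕ) :=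
  (cells n lam).filter fun u => (u.1, u.2 + 1) ∈ cells n lam ∧ σ (u.1, u.2 + 1) < σ u

/-- `Diff(σ)`. -/
def DiffSet (n : ℕ) (lam : ℕ → ℕ) (σ : ℕ × ℕ → ℕ) : Finset (ℕ × ℕ) :=
  (cells n lam).filter fun u => (u.1, u.2 + 1) ∈ cells n lam ∧ σ (u.1, u.2 + 1) ≠ σ u

/-- `arm(i,j) = λ_i − j`. -/
def armC (lam : ℕ → ℕ) (u : ℕ × ℕ) : ℕ := lam u.1 - u.2

/-- `leg(i,j) = λ'_j − i`. -/
def legC (n : ℕ) (lam : ℕ → ℕ) (u : ℕ × ℕ) : ℕ := conj n lam u.2 - u.1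

/-- `maj(σ) = Σ_{u ∈ Des(σ)} arm(u)`. -/
def majStat (n : ℕ) (lam : ℕ → ℕ) (σ : ℕ × ℕ → ℕ) : ℕ :=
  ∑ u ∈ DesSet n lam σ, armC lam u

/-- `|Inv(σ)|`: the number of pairs of attacking cells `u` before `v` in reading order
with `σ(u) > σ(v)`. -/
def invPairsL (n : ℕ) (lam : ℕ → ℕ) (σ : ℕ × ℕ → ℕ) : ℕ :=
  ((cells n lam ×ˢ cells n lam).filter fun x =>
    attack x.1 x.2 ∧ readBefore x.1 x.2 ∧ σ x.2 < σ x.1).card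

/-- `inv(σ) = |Inv(σ)| − Σ_{u ∈ Des(σ)} leg(u)`. -/
def invStat (n : ℕ) (lam : ℕ → ℕ) (σ : ℕ × ℕ → ℕ) : ℤ :=
  (invPairsL n lam σ : ℤ) - ∑ u ∈ DesSet n lam σ, (legC n lam u : ℤ)

/-- `n(λ) = Σ_i (i−1) λ_i`. -/
def nlam (n : ℕ) (lam : ℕ → ℕ) : ℕ :=
  ∑ i ∈ Finset.Icc 1 n, (i - 1) * lam i

/-- The Haglund–Haiman–Loehr-type weight of a filling:
`HHL(σ) = t^{n(λ)−inv(σ)} q^{maj(σ)} Π_{u∈Diff(σ)} (1−t)/(1−q^{arm(u)} t^{leg(u)+1})`. -/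
def HHL (n : ℕ) (lam : ℕ → ℕ) (σ : ℕ × ℕ → ℕ) : Kqt :=
  tt ^ ((nlam n lam : ℤ) - invStat n lam σ) * qq ^ majStat n lam σ *
    ∏ u ∈ DiffSet n lam σ, (1 - tt) / (1 - qq ^ armC lam u * tt ^ (legC n lam u + 1))

/-! ### The λ-chain Γ -/

/-- The row `(i,n),(i,n−1),…,(i,low)`. -/
def rowL (n i low : ℕ) : List (ℕ × ℕ) :=
  (List.range (n + 1 - low)).map fun r => (i, n - r)

/-- `Γ(k)`: rows `i = k, k−1, …, 1`, row `i` being `(i,n),…,(i,k+1)`. -/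
def GammaK (n k : ℕ) : List (ℕ × ℕ) :=
  (List.range k).flatMap fun s => rowL n (k - s) (k + 1)

/-- `Γ'(k)`: rows `i = k, k−1, …, 1`, row `i` being `(i,n),…,(i,k+2)`
(the last transposition `(i,k+1)` of each row of `Γ(k)` removed). -/
def GammaK' (n k : ℕ) : List (ℕ × ℕ) :=
  (List.range k).flatMap fun s => rowL n (k - s) (k + 2)

/-- The λ-chain `Γ = Γ_{λ_1} Γ_{λ_1−1} ⋯ Γ_2`, where `Γ_j = Γ'(λ'_j)` if
`j = min{i : λ'_i = λ'_j}` (equivalently `λ'_{j−1} ≠ λ'_j`) and `Γ_j = Γ(λ'_j)` otherwise.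
Each entry records its segment index `j` together with the root `(i,k)`. -/
def lamChain (n : ℕ) (lam : ℕ → ℕ) : List (ℕ × ℕ × ℕ) :=
  (List.range (lam 1 - 1)).flatMap fun s =>
    let j := lam 1 - s
    let seg :=
      if conj n lam (j - 1) = conj n lam j then GammaK n (conj n lam j)
      else GammaK' n (conj n lam j)
    seg.map fun p => (j, p.1, p.2)

/-- The underlying list of roots (transpositions) of the λ-chain. -/
def chainRoots (Γ : List (ℕ × ℕ × ℕ)) : List (ℕ × ℕ) := Γ.map fun e => e.2

/-! ### The Ram–Yip weight and the filling map -/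

/-- The Ram–Yip weight `RY(w,T)` of a folding pair, where `T` is the subsequence of the
λ-chain at positions `J`. -/
def RY (n : ℕ) [NeZero n] (lam : ℕ → ℕ) (w : Equiv.Perm (Fin n)) (J : Finset ℕ) : Kqt :=
  tt ^ (((len w : ℤ) - (len (wT w (chainRoots (lamChain n lam)) J) : ℤ) - (J.card : ℤ)) / 2) *
    (1 - tt) ^ J.card *
    ∏ r ∈ J,
      (let e := (lamChain n lam).getD r (0, 0, 0)
       let a := lam e.2.1 - (e.1 - 1)
       if isPosDec w (chainRoots (lamChain n lam)) J r then
         (1 - qq ^ a * tt ^ (e.2.2 - e.2.1))⁻¹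
       else qq ^ a * tt ^ (e.2.2 - e.2.1) * (1 - qq ^ a * tt ^ (e.2.2 - e.2.1))⁻¹)

/-- `π_j = w T_{λ_1} ⋯ T_{j+1}`: the product of `w` with the entries of `T` lying in the
segments of column index `> j`. -/
def pij (n : ℕ) [NeZero n] (lam : ℕ → ℕ) (w : Equiv.Perm (Fin n)) (J : Finset ℕ) (j : ℕ) :
    Equiv.Perm (Fin n) :=
  applyTs w (pickP (chainRoots (lamChain n lam))
    (J.filter fun r => j < ((lamChain n lam).getD r (0, 0, 0)).1))

/-- The filling map `f`: `f(w,T)(i,j) = π_j(i)` on cells of λ (and `0` off the diagram). -/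
def fmap (n : ℕ) [NeZero n] (lam : ℕ → ℕ) (w : Equiv.Perm (Fin n)) (J : Finset ℕ) :
    ℕ × ℕ → ℕ :=
  fun c => if c ∈ cells n lam then pv (pij n lam w J c.2) c.1 else 0

/-- The fiber `f⁻¹(σ)` of the filling map over σ, inside `ℱ(λ)`. -/
def fiberSet (n : ℕ) [NeZero n] (lam : ℕ → ℕ) (σ : ℕ × ℕ → ℕ) :
    Finset (Equiv.Perm (Fin n) × Finset ℕ) :=
  (Finset.univ ×ˢ (Finset.range (lamChain n lam).length).powerset).filter
    fun p => ∀ u ∈ cells n lam, fmap n lam p.1 p.2 u = σ u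

/-- The Finset of all nonattacking fillings `T(λ,n)` (normalized to vanish off the diagram). -/
def TFinset (n : ℕ) (lam : ℕ → ℕ) : Finset (ℕ × ℕ → ℕ) :=
  (((cells n lam).pi fun _ => Finset.Icc 1 n).image
      fun g c => if h : c ∈ cells n lam then g c h else 0).filter
    fun σ => NonAttacking n lam σ

/-- The monomial `x^{content(σ)} = x_1^{c_1} ⋯ x_n^{c_n}` in `ℚ(q,t)[x_1,…,x_n]`. -/
def contentMon (n : ℕ) [NeZero n] (lam : ℕ → ℕ) (σ : ℕ × ℕ → ℕ) :
    MvPolynomial (Fin n) Kqt :=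
  ∏ a ∈ Finset.Icc 1 n,
    (MvPolynomial.X (idx n a)) ^ (((cells n lam).filter fun c => σ c = a).card)

/-! ### The weight μ(T) and the content vector (for Statement 4) -/

/-- `l_r = #{r' ≤ r : β_{r'} = β_r}` for the `r`-th entry of the λ-chain (0-based positions). -/
def lcount (Γ : List (ℕ × ℕ × ℕ)) (r : ℕ) : ℕ :=
  ((List.range (r + 1)).filter fun r' => (Γ.getD r' (0, 0, 0)).2 = (Γ.getD r (0, 0, 0)).2).length

/-- The affine map `r̂_r : v ↦ v − (v_i − v_k − l_r)(e_i − e_k)` of `ℝⁿ`,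
for the `r`-th entry `(i,k)` of the λ-chain. -/
def hatr (n : ℕ) [NeZero n] (Γ : List (ℕ × ℕ × ℕ)) (r : ℕ) (v : Fin n → ℝ) : Fin n → ℝ :=
  fun x =>
    v x - (v (idx n (Γ.getD r (0, 0, 0)).2.1) - v (idx n (Γ.getD r (0, 0, 0)).2.2)
            - (lcount Γ r : ℝ)) *
      ((if x = idx n (Γ.getD r (0, 0, 0)).2.1 then (1 : ℝ) else 0) -
        (if x = idx n (Γ.getD r (0, 0, 0)).2.2 then (1 : ℝ) else 0))

/-- `μ(T) = r̂_{j_1} r̂_{j_2} ⋯ r̂_{j_s}(λ) ∈ ℝⁿ` for `T` the subsequence of the λ-chain at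
positions `J = {j_1 < … < j_s}`. -/
def muT (n : ℕ) [NeZero n] (lam : ℕ → ℕ) (J : Finset ℕ) : Fin n → ℝ :=
  (J.sort (· ≤ ·)).foldr (hatr n (lamChain n lam)) fun x => (lam (x.val + 1) : ℝ)

/-- The action of `S_n` on `ℝⁿ` by permuting coordinates: `(w(v))_{w(i)} = v_i`. -/
def wAct {n : ℕ} [NeZero n] (w : Equiv.Perm (Fin n)) (v : Fin n → ℝ) : Fin n → ℝ :=
  fun x => v (w⁻¹ x)

/-- The content vector of a filling, as an element of `ℝⁿ`. -/
def contentVec (n : ℕ) (lam : ℕ → ℕ) (σ : ℕ × ℕ → ℕ) : Fin n → ℝ :=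
  fun x => (((cells n lam).filter fun c => σ c = x.val + 1).card : ℝ)

/-! ### Row sums (Statements 5 and 6) -/

/-- The weight of a subsequence `T` (at positions `J`) of a list `Δ` of transpositions, in the
single-`q` setting: `t^{(ℓ(wT)−ℓ(w)−|T|)/2}(1−t)^{|T|} Π_{(i,k)∈T⁺} 1/(1−q t^{k−i})
Π_{(i,k)∈T⁻} q t^{k−i}/(1−q t^{k−i})`, positivity in the increasing-length convention. -/
def RYrow (n : ℕ) [NeZero n] (w : Equiv.Perm (Fin n)) (Δ : List (ℕ × ℕ)) (J : Finset ℕ) : Kqt :=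
  tt ^ (((len (wT w Δ J) : ℤ) - (len w : ℤ) - (J.card : ℤ)) / 2) * (1 - tt) ^ J.card *
    ∏ r ∈ J,
      (let e := Δ.getD r (0, 0)
       if isPosInc w Δ J r then (1 - qq * tt ^ (e.2 - e.1))⁻¹
       else qq * tt ^ (e.2 - e.1) * (1 - qq * tt ^ (e.2 - e.1))⁻¹)

/-- `Δ = ((1,p+2),(1,p+3),…,(1,n))`. -/
def delta5 (n p : ℕ) : List (ℕ × ℕ) :=
  (List.range (n - p - 1)).map fun r => (1, p + 2 + r)

/-- `Δ = ((i,p+1),(i,p+2),…,(i,n))`. -/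
def delta6 (n i p : ℕ) : List (ℕ × ℕ) :=
  (List.range (n - p)).map fun r => (i, p + 1 + r)

/-! ### The field `ℚ(q_1,…,q_p,t)` and two-column fillings (Statements 7, 9, 10) -/

/-- The field `ℚ(q_1,…,q_p,t)` of rational functions in `p+1` variables. -/
abbrev Kq (p : ℕ) : Type := FractionRing (MvPolynomial (Fin (p + 1)) ℚ)

/-- The variable `q_i` (for `1 ≤ i ≤ p`). -/
def qv (p i : ℕ) : Kq p :=
  algebraMap (MvPolynomial (Fin (p + 1)) ℚ) (Kq p)
    (MvPolynomial.X ⟨(i - 1) % (p + 1), Nat.mod_lt _ (Nat.succ_pos p)⟩)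

/-- The variable `t`. -/
def tv (p : ℕ) : Kq p :=
  algebraMap (MvPolynomial (Fin (p + 1)) ℚ) (Kq p) (MvPolynomial.X ⟨p, Nat.lt_succ_self p⟩)

/-- The multi-`q` weight of a subsequence `T` (at positions `J`) of `Δ`:
`t^{(ℓ(wT)−ℓ(w)−|T|)/2}(1−t)^{|T|} Π_{(i,k)∈T⁺} 1/(1−q_i t^{k−i})
Π_{(i,k)∈T⁻} q_i t^{k−i}/(1−q_i t^{k−i})`, positivity in the increasing-length convention. -/
def RYmulti (n p : ℕ) [NeZero n] (w : Equiv.Perm (Fin n)) (Δ : List (ℕ × ℕ)) (J : Finset ℕ) :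
    Kq p :=
  tv p ^ (((len (wT w Δ J) : ℤ) - (len w : ℤ) - (J.card : ℤ)) / 2) * (1 - tv p) ^ J.card *
    ∏ r ∈ J,
      (let e := Δ.getD r (0, 0)
       if isPosInc w Δ J r then (1 - qv p e.1 * tv p ^ (e.2 - e.1))⁻¹
       else qv p e.1 * tv p ^ (e.2 - e.1) * (1 - qv p e.1 * tv p ^ (e.2 - e.1))⁻¹)

/-- `Δ = ((1,p+1),…,(1,n),(2,p+1),…,(2,n),…,(p,p+1),…,(p,n))`. -/
def delta7 (n p : ℕ) : List (ℕ × ℕ) :=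
  (List.range p).flatMap fun s => (List.range (n - p)).map fun r => (s + 1, p + 1 + r)

/-- The cells of the two-column filling `C_2C_1`, with right column (column 1) of length `p'`
and left column (column 2) of length `p`. -/
def cells2 (p p' : ℕ) : Finset (ℕ × ℕ) :=
  (Finset.Icc 1 p' ×ˢ ({1} : Finset ℕ)) ∪ (Finset.Icc 1 p ×ˢ ({2} : Finset ℕ))

/-- The entry of the two-column filling `C_2C_1` at a cell. -/
def entry2 (C2 C1 : ℕ → ℕ) : ℕ × ℕ → ℕ :=
  fun c => if c.2 = 1 then C1 c.1 else C2 c.1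

/-- `|Inv(C_2C_1)|`: the number of pairs of attacking cells `u` before `v` in reading order
with `entry(u) > entry(v)`. -/
def invPairs2 (C2 C1 : ℕ → ℕ) (p p' : ℕ) : ℕ :=
  ((cells2 p p' ×ˢ cells2 p p').filter fun x =>
    attack x.1 x.2 ∧ readBefore x.1 x.2 ∧ entry2 C2 C1 x.2 < entry2 C2 C1 x.1).card

/-- `inv(C_2C_1) = |Inv(C_2C_1)| − Σ_{u ∈ Des(C_2C_1)} leg(u)` where
`Des(C_2C_1) = {(i,1) : i ≤ p, C_1(i) > C_2(i)}` and `leg(i,1) = p' − i`. -/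
def inv2 (C2 C1 : ℕ → ℕ) (p p' : ℕ) : ℤ :=
  (invPairs2 C2 C1 p p' : ℤ) -
    ∑ i ∈ (Finset.Icc 1 p).filter fun i => C2 i < C1 i, ((p' : ℤ) - (i : ℤ))

/-- `inv(C) = #{(i,k) : i < k, C(i) > C(k)}` for a single column `C` of length `p`. -/
def invColumn (C : ℕ → ℕ) (p : ℕ) : ℕ :=
  ((Finset.Icc 1 p ×ˢ Finset.Icc 1 p).filter fun x => x.1 < x.2 ∧ C x.2 < C x.1).card

end

end Compress

/-! In fact `content(f(w,T)) = w(μ(T))` exactly, by induction on `T`. Remove the first entry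
`β = (i,k)` of `T`, lying in the segment `Γ_{j₀}`. The fillings `f(w,T)` and `f(w(i,k), T∖β)`
agree in the columns `< j₀`; in the columns `≥ j₀` they are the row-constant fillings by `w` and by
`w(i,k)`, which differ only in row `i`, because row `k` does not reach column `j₀`. Row `i` has
`λ_i + 1 - j₀` cells there, which is exactly `l_β`: up to `β`, the root `(i,k)` occurs once in
each segment `Γ_j` with `j₀ ≤ j ≤ λ_i`. So the content changes by
`l_β (e_{w(i)} - e_{w(k)})`, and so does `w(μ)` when `r̂_β` is applied:
`w(r̂_β v) = w(i,k)(v) + l_β (e_{w(i)} - e_{w(k)})`. -/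

namespace Compress

section Lists

variable {α : Type*}

lemma exists_take_succ_flatMap_range (f : ℕ → List α) (d : α) {N r : ℕ}
    (hr : r < ((List.range N).flatMap f).length) :
    ∃ s < N, ∃ o < (f s).length, ((List.range N).flatMap f).getD r d = (f s).getD o d ∧
      ((List.range N).flatMap f).take (r + 1) = (List.range s).flatMap f ++ (f s).take (o + 1) := by
  induction N with
  | zero => simp at hr
  | succ N ih =>
    rw [List.range_succ, List.flatMap_append, List.flatMap_singleton] at hr ⊢
    set A := (List.range N).flatMap f
    by_cases hrA : r < A.length
    · obtain ⟨s, hs, o, ho, hget, htake⟩ := ih hrA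
      refine ⟨s, by omega, o, ho, ?_, ?_⟩
      · rw [List.getD_append _ _ _ _ hrA, hget]
      · rw [List.take_append_of_le_length (by omega), htake]
    · rw [List.length_append] at hr
      refine ⟨N, by omega, r - A.length, by omega, ?_, ?_⟩
      · rw [List.getD_append_right _ _ _ _ (by omega)]
      · rw [List.take_append, List.take_of_length_le (by omega)]
        congr 2
        omega

lemma count_take_succ_getElem [BEq α] [LawfulBEq α] {l : List α} (hl : l.Nodup) {o : ℕ}
    (ho : o < l.length) : (l.take (o + 1)).count l[o] = 1 := by
  have hmem : l[o] ∈ l.take (o + 1) := by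
    rw [← List.getElem_take (j := o + 1) (h := by rw [List.length_take]; omega)]
    exact List.getElem_mem _
  have hpos := List.count_pos_iff.mpr hmem
  have hle := (List.take_sublist (o + 1) l).count_le l[o]
  rw [hl.count, if_pos (List.getElem_mem ho)] at hle
  omega

end Lists

lemma lcount_eq_count_take (Γ : List (ℕ × ℕ × ℕ)) {r : ℕ} (hr : r < Γ.length) :
    lcount Γ r = ((chainRoots Γ).take (r + 1)).count (Γ.getD r (0, 0, 0)).2 := by
  have htake : (chainRoots Γ).take (r + 1) =
      (List.range (r + 1)).map fun r' => (Γ.getD r' (0, 0, 0)).2 := by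
    apply List.ext_getElem
    · simp only [chainRoots, List.length_take, List.length_map, List.length_range]
      omega
    · intro m h1 h2
      simp only [chainRoots, List.getElem_take, List.getElem_map, List.getElem_range]
      rw [List.getD_eq_getElem]
  rw [lcount, htake, List.count, List.countP_map, List.countP_eq_length_filter]
  congr 1
  refine List.filter_congr fun _ _ => ?_
  rw [Bool.eq_iff_iff]
  simp

section Chain

variable {n : ℕ} {lam : ℕ → ℕ}

lemma mem_flatMap_rowL {κ low a b : ℕ} :
    (a, b) ∈ (List.range κ).flatMap (fun s => rowL n (κ - s) low) ↔
      1 ≤ a ∧ a ≤ κ ∧ low ≤ b ∧ b ≤ n := by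
  simp only [rowL, List.mem_flatMap, List.mem_range, List.mem_map, Prod.mk.injEq]
  constructor
  · rintro ⟨s, hs, r, hr, rfl, rfl⟩
    omega
  · rintro ⟨h1, h2, h3, h4⟩
    exact ⟨κ - a, by omega, n - b, by omega, by omega, by omega⟩

lemma nodup_flatMap_rowL {κ low : ℕ} :
    ((List.range κ).flatMap fun s => rowL n (κ - s) low).Nodup := by
  refine List.nodup_flatMap.mpr ⟨fun s _ => ?_, List.nodup_range.pairwise_of_forall_ne ?_⟩
  · refine List.nodup_range.map_on fun r hr r' hr' h => ?_
    simp only [List.mem_range, Prod.mk.injEq] at hr hr' h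
    omega
  · intro s hs s' hs' hne p hp hp'
    simp only [rowL, List.mem_map, List.mem_range] at hs hs' hp hp'
    obtain ⟨r, -, rfl⟩ := hp
    obtain ⟨r', -, h⟩ := hp'
    simp only [Prod.mk.injEq] at h
    omega

lemma conj_antitone : Antitone (conj n lam) := fun _ _ h =>
  Finset.card_le_card fun a ha => by
    simp only [Finset.mem_filter] at ha ⊢
    exact ⟨ha.1, h.trans ha.2⟩

lemma conj_le_pred {j : ℕ} : conj n lam j ≤ n - 1 :=
  (Finset.card_filter_le _ _).trans (by simp)

lemma le_conj_iff (hlam : AntitoneOn lam (Set.Icc 1 n)) {i j : ℕ} (hi : 1 ≤ i) (hin : i ≤ n - 1) :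
    i ≤ conj n lam j ↔ j ≤ lam i := by
  unfold conj
  constructor
  · intro hc
    by_contra hj
    have hsub : (Finset.Icc 1 (n - 1)).filter (fun a => j ≤ lam a) ⊆ Finset.Icc 1 (i - 1) := by
      intro a ha
      simp only [Finset.mem_filter, Finset.mem_Icc] at ha ⊢
      refine ⟨ha.1.1, Nat.le_sub_one_of_lt (lt_of_not_ge fun hia => hj ?_)⟩
      exact ha.2.trans (hlam ⟨hi, by omega⟩ ⟨ha.1.1, by omega⟩ hia)
    have := Finset.card_le_card hsub
    simp only [Nat.card_Icc] at this
    omega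
  · intro hj
    have hsub : Finset.Icc 1 i ⊆ (Finset.Icc 1 (n - 1)).filter (fun a => j ≤ lam a) := by
      intro a ha
      simp only [Finset.mem_filter, Finset.mem_Icc] at ha ⊢
      exact ⟨⟨ha.1, by omega⟩, hj.trans (hlam ⟨ha.1, by omega⟩ ⟨hi, by omega⟩ ha.2)⟩
    have := Finset.card_le_card hsub
    simp only [Nat.card_Icc] at this
    omega

def chainSegment (n : ℕ) (lam : ℕ → ℕ) (j : ℕ) : List (ℕ × ℕ) :=
  if conj n lam (j - 1) = conj n lam j then GammaK n (conj n lam j)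
  else GammaK' n (conj n lam j)

lemma lamChain_eq_flatMap (n : ℕ) (lam : ℕ → ℕ) :
    lamChain n lam = (List.range (lam 1 - 1)).flatMap
      fun s => (chainSegment n lam (lam 1 - s)).map fun p => (lam 1 - s, p) := rfl

lemma nodup_chainSegment {j : ℕ} : (chainSegment n lam j).Nodup := by
  unfold chainSegment GammaK GammaK'
  split_ifs <;> exact nodup_flatMap_rowL

lemma bounds_of_mem_chainSegment {j a b : ℕ} (h : (a, b) ∈ chainSegment n lam j) :
    1 ≤ a ∧ a ≤ conj n lam j ∧ conj n lam j < b ∧ b ≤ n := by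
  unfold chainSegment GammaK GammaK' at h
  split_ifs at h <;> rw [mem_flatMap_rowL] at h <;> omega

lemma mem_chainSegment_iff {i k j₀ j : ℕ} (hi : 1 ≤ i) (hk : conj n lam j₀ < k) (hkn : k ≤ n)
    (hj : j₀ < j) :
    (i, k) ∈ chainSegment n lam j ↔ i ≤ conj n lam j := by
  have h₁ : conj n lam j ≤ conj n lam (j - 1) := conj_antitone (by omega)
  have h₂ : conj n lam (j - 1) ≤ conj n lam j₀ := conj_antitone (by omega)
  unfold chainSegment GammaK GammaK'
  split_ifs <;> rw [mem_flatMap_rowL] <;> omega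

lemma lamChain_getD_bounds {r j₀ i k : ℕ} (hr : r < (lamChain n lam).length)
    (he : (lamChain n lam).getD r (0, 0, 0) = (j₀, i, k)) :
    2 ≤ j₀ ∧ j₀ ≤ lam 1 ∧ 1 ≤ i ∧ i ≤ conj n lam j₀ ∧ conj n lam j₀ < k ∧ k ≤ n := by
  have hmem : (j₀, i, k) ∈ lamChain n lam := by
    rw [← he, List.getD_eq_getElem _ _ hr]
    exact List.getElem_mem hr
  rw [lamChain_eq_flatMap] at hmem
  simp only [List.mem_flatMap, List.mem_range, List.mem_map, Prod.mk.injEq] at hmem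
  obtain ⟨s, hs, p, hp, rfl, rfl⟩ := hmem
  have := bounds_of_mem_chainSegment hp
  omega

lemma pairwise_lamChain_tag_ge : (lamChain n lam).Pairwise fun e e' => e'.1 ≤ e.1 := by
  rw [lamChain_eq_flatMap, List.pairwise_flatMap]
  refine ⟨fun s _ => List.pairwise_map.mpr (List.pairwise_of_forall fun _ _ => le_rfl), ?_⟩
  refine List.pairwise_lt_range.imp fun {s s'} hss' e he e' he' => ?_
  simp only [List.mem_map] at he he'
  obtain ⟨p, -, rfl⟩ := he
  obtain ⟨p', -, rfl⟩ := he'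
  omega

lemma lamChain_tag_le {r r' : ℕ} (hr : r < (lamChain n lam).length) (hr' : r' ≤ r) :
    ((lamChain n lam).getD r (0, 0, 0)).1 ≤ ((lamChain n lam).getD r' (0, 0, 0)).1 := by
  rcases hr'.eq_or_lt with rfl | hlt
  · rfl
  rw [List.getD_eq_getElem _ _ hr, List.getD_eq_getElem _ _ (hlt.trans hr)]
  exact List.pairwise_iff_getElem.mp pairwise_lamChain_tag_ge _ _ _ _ hlt

lemma count_flatMap_range_chainSegment (hlam : AntitoneOn lam (Set.Icc 1 n))
    {i k j₀ s : ℕ} (hi : 1 ≤ i) (hin : i ≤ n - 1) (hk : conj n lam j₀ < k) (hkn : k ≤ n)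
    (hs : s ≤ lam 1 - j₀) :
    ((List.range s).flatMap fun s' => chainSegment n lam (lam 1 - s')).count (i, k) =
      s - (lam 1 - lam i) := by
  induction s with
  | zero => simp
  | succ s ih =>
    have hseg : (chainSegment n lam (lam 1 - s)).count (i, k) =
        if lam 1 - s ≤ lam i then 1 else 0 := by
      rw [nodup_chainSegment.count]
      exact if_congr ((mem_chainSegment_iff hi hk hkn (by omega)).trans
        (le_conj_iff hlam hi hin)) rfl rfl
    rw [List.range_succ, List.flatMap_append, List.flatMap_singleton, List.count_append,
      ih (by omega), hseg]
    split_ifs <;> omega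

lemma lcount_lamChain (hlam : AntitoneOn lam (Set.Icc 1 n)) {r j₀ i k : ℕ}
    (hr : r < (lamChain n lam).length) (he : (lamChain n lam).getD r (0, 0, 0) = (j₀, i, k)) :
    lcount (lamChain n lam) r = lam i + 1 - j₀ := by
  obtain ⟨-, -, hi, hij, hk, hkn⟩ := lamChain_getD_bounds hr he
  obtain ⟨s, hs, o, ho, hget, htake⟩ := exists_take_succ_flatMap_range
    (fun s => (chainSegment n lam (lam 1 - s)).map fun p => (lam 1 - s, p)) (0, 0, 0) hr
  rw [← lamChain_eq_flatMap] at hget htake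
  rw [List.length_map] at ho
  have hentry : (j₀, i, k) = (lam 1 - s, (chainSegment n lam (lam 1 - s))[o]) := by
    rw [← he, hget, List.getD_eq_getElem _ _ (by simpa using ho), List.getElem_map]
  have hin : i ≤ n - 1 := hij.trans conj_le_pred
  simp only [Prod.mk.injEq] at hentry
  obtain ⟨rfl, hik⟩ := hentry
  have hroots : (chainRoots (lamChain n lam)).take (r + 1) =
      (List.range s).flatMap (fun s' => chainSegment n lam (lam 1 - s')) ++
        (chainSegment n lam (lam 1 - s)).take (o + 1) := by
    rw [chainRoots, ← List.map_take, htake]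
    simp [List.map_flatMap, List.map_take, Function.comp_def]
  rw [lcount_eq_count_take _ hr, he, hroots, List.count_append,
    count_flatMap_range_chainSegment (s := s) hlam hi hin hk hkn (by omega), hik,
    count_take_succ_getElem nodup_chainSegment ho]
  have := (le_conj_iff hlam hi hin).mp hij
  have : lam i ≤ lam 1 := hlam ⟨le_rfl, by omega⟩ ⟨hi, by omega⟩ hi
  omega

end Chain

section Fillings

variable {n : ℕ} {lam : ℕ → ℕ}

lemma antitoneOn_of_regular (hreg : ∀ i, 1 ≤ i → i < n → lam (i + 1) < lam i) :
    AntitoneOn lam (Set.Icc 1 n) := by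
  intro a ha b hb hab
  induction b, hab using Nat.le_induction with
  | base => exact le_rfl
  | succ m hm ih =>
    exact (hreg m (ha.1.trans hm) hb.2).le.trans (ih ⟨ha.1.trans hm, by have := hb.2; omega⟩)

lemma mem_cells {c : ℕ × ℕ} :
    c ∈ cells n lam ↔ 1 ≤ c.1 ∧ c.1 ≤ n - 1 ∧ 1 ≤ c.2 ∧ c.2 ≤ lam c.1 ∧ c.2 ≤ lam 1 := by
  simp only [cells, Finset.mem_filter, Finset.mem_product, Finset.mem_Icc]
  tauto

lemma cells_filter_row (hlam : AntitoneOn lam (Set.Icc 1 n)) (hzero : lam n = 0)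
    {i₀ j₀ : ℕ} (hi : 1 ≤ i₀) (hin : i₀ ≤ n) (hj : 1 ≤ j₀) :
    (cells n lam).filter (fun c => c.1 = i₀ ∧ j₀ ≤ c.2) = {i₀} ×ˢ Finset.Icc j₀ (lam i₀) := by
  have hrow : i₀ ≤ n - 1 ∨ lam i₀ = 0 := by
    rcases hin.lt_or_eq with h | rfl
    · exact Or.inl (by omega)
    · exact Or.inr hzero
  have hle : lam i₀ ≤ lam 1 := hlam ⟨le_rfl, by omega⟩ ⟨hi, hin⟩ hi
  ext ⟨a, b⟩
  simp only [Finset.mem_filter, mem_cells, Finset.mem_product, Finset.mem_singleton,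
    Finset.mem_Icc]
  constructor
  · rintro ⟨⟨-, -, -, hb, -⟩, rfl, hjb⟩
    exact ⟨rfl, hjb, hb⟩
  · rintro ⟨rfl, hjb, hb⟩
    omega

lemma card_cells_filter_row (hlam : AntitoneOn lam (Set.Icc 1 n)) (hzero : lam n = 0)
    {i₀ j₀ : ℕ} (hi : 1 ≤ i₀) (hin : i₀ ≤ n) (hj : 1 ≤ j₀) :
    ((cells n lam).filter (fun c => c.1 = i₀ ∧ j₀ ≤ c.2)).card = lam i₀ + 1 - j₀ := by
  rw [cells_filter_row hlam hzero hi hin hj, Finset.card_product, Finset.card_singleton,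
    Nat.card_Icc, one_mul]

lemma contentVec_eq_sum (σ : ℕ × ℕ → ℕ) (x : Fin n) :
    contentVec n lam σ x = ∑ c ∈ cells n lam, if σ c = x.val + 1 then (1 : ℝ) else 0 := by
  rw [Finset.sum_boole]
  rfl

lemma contentVec_congr {σ τ : ℕ × ℕ → ℕ} (h : ∀ u ∈ cells n lam, σ u = τ u) :
    contentVec n lam σ = contentVec n lam τ := by
  funext x
  rw [contentVec, contentVec, Finset.filter_congr fun u hu => by rw [h u hu]]

lemma contentVec_eq_of_refill (R : ℕ × ℕ → Prop) [DecidablePred R] {σ τ : ℕ × ℕ → ℕ} {b b' : ℕ}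
    (hout : ∀ c ∈ cells n lam, ¬ R c → σ c = τ c) (hσ : ∀ c ∈ (cells n lam).filter R, σ c = b)
    (hτ : ∀ c ∈ (cells n lam).filter R, τ c = b') (x : Fin n) :
    contentVec n lam σ x = contentVec n lam τ x + ((cells n lam).filter R).card *
      ((if b = x.val + 1 then (1 : ℝ) else 0) - (if b' = x.val + 1 then (1 : ℝ) else 0)) := by
  have hsplit : ∀ (ρ : ℕ × ℕ → ℕ) (v : ℕ), (∀ c ∈ (cells n lam).filter R, ρ c = v) →
      contentVec n lam ρ x = ((cells n lam).filter R).card * (if v = x.val + 1 then 1 else 0) +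
        ∑ c ∈ (cells n lam).filter (¬ R ·), if ρ c = x.val + 1 then (1 : ℝ) else 0 := by
    intro ρ v hρ
    rw [contentVec_eq_sum, ← Finset.sum_filter_add_sum_filter_not _ R,
      Finset.sum_congr rfl fun c hc => by rw [hρ c hc], Finset.sum_const, nsmul_eq_mul]
  rw [hsplit σ b hσ, hsplit τ b' hτ, Finset.sum_congr rfl fun c hc => by
    rw [hout c (Finset.mem_filter.mp hc).1 (Finset.mem_filter.mp hc).2]]
  ring

variable [NeZero n]

lemma idx_val {a : ℕ} (h₁ : 1 ≤ a) (h₂ : a ≤ n) : (idx n a).val = a - 1 :=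
  Nat.mod_eq_of_lt (by omega)

lemma idx_inj {a b : ℕ} (ha₁ : 1 ≤ a) (ha₂ : a ≤ n) (hb₁ : 1 ≤ b) (hb₂ : b ≤ n) :
    idx n a = idx n b ↔ a = b := by
  rw [Fin.ext_iff, idx_val ha₁ ha₂, idx_val hb₁ hb₂]
  omega

lemma pv_eq_iff (w : Equiv.Perm (Fin n)) (a : ℕ) (x : Fin n) :
    pv w a = x.val + 1 ↔ w (idx n a) = x := by
  rw [pv, Fin.ext_iff]
  omega

lemma sort_insert_of_forall_lt {s : Finset ℕ} {a : ℕ} (h : ∀ x ∈ s, a < x) :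
    (insert a s).sort (· ≤ ·) = a :: s.sort (· ≤ ·) :=
  Finset.sort_insert _ (fun b hb => (h b hb).le) fun ha => lt_irrefl a (h a ha)

lemma pickP_insert_of_forall_lt (Δ : List (ℕ × ℕ)) {s : Finset ℕ} {a : ℕ}
    (h : ∀ x ∈ s, a < x) : pickP Δ (insert a s) = Δ.getD a (0, 0) :: pickP Δ s := by
  rw [pickP, sort_insert_of_forall_lt h]
  rfl

lemma muT_insert_of_forall_lt {s : Finset ℕ} {a : ℕ} (h : ∀ x ∈ s, a < x) :
    muT n lam (insert a s) = hatr n (lamChain n lam) a (muT n lam s) := by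
  rw [muT, sort_insert_of_forall_lt h]
  rfl

lemma pij_of_forall_tag_le (w : Equiv.Perm (Fin n)) {J : Finset ℕ} {j : ℕ}
    (h : ∀ ρ ∈ J, ((lamChain n lam).getD ρ (0, 0, 0)).1 ≤ j) : pij n lam w J j = w := by
  rw [pij, Finset.filter_false_of_mem fun ρ hρ => not_lt.mpr (h ρ hρ)]
  simp [pickP, applyTs]

lemma pij_insert_of_lt (w : Equiv.Perm (Fin n)) {s : Finset ℕ} {a j₀ i k j : ℕ}
    (hs : ∀ x ∈ s, a < x) (he : (lamChain n lam).getD a (0, 0, 0) = (j₀, i, k)) (hj : j < j₀) :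
    pij n lam w (insert a s) j = pij n lam (w * tr n i k) s j := by
  have hroot : (chainRoots (lamChain n lam)).getD a (0, 0) = (i, k) := by
    rw [chainRoots, List.getD_map (f := Prod.snd) (d := (0, 0, 0)), he]
  rw [pij, pij, Finset.filter_insert, if_pos (by rw [he]; exact hj),
    pickP_insert_of_forall_lt _ fun x hx => hs x (Finset.mem_of_mem_filter x hx), hroot]
  rfl

lemma fmap_of_forall_tag_le (w : Equiv.Perm (Fin n)) {J : Finset ℕ} {c : ℕ × ℕ}
    (hc : c ∈ cells n lam) (h : ∀ ρ ∈ J, ((lamChain n lam).getD ρ (0, 0, 0)).1 ≤ c.2) :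
    fmap n lam w J c = pv w c.1 := by
  rw [fmap, if_pos hc, pij_of_forall_tag_le w h]

lemma fmap_insert_of_lt (w : Equiv.Perm (Fin n)) {s : Finset ℕ} {a j₀ i k : ℕ} {c : ℕ × ℕ}
    (hs : ∀ x ∈ s, a < x) (he : (lamChain n lam).getD a (0, 0, 0) = (j₀, i, k)) (hc : c.2 < j₀) :
    fmap n lam w (insert a s) c = fmap n lam (w * tr n i k) s c := by
  simp only [fmap, pij_insert_of_lt w hs he hc]

lemma wAct_hatr (Γ : List (ℕ × ℕ × ℕ)) {r j₀ i k : ℕ}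
    (he : Γ.getD r (0, 0, 0) = (j₀, i, k)) (hne : idx n i ≠ idx n k)
    (w : Equiv.Perm (Fin n)) (v : Fin n → ℝ) (x : Fin n) :
    wAct w (hatr n Γ r v) x = wAct (w * tr n i k) v x + (lcount Γ r : ℝ) *
      ((if w (idx n i) = x then (1 : ℝ) else 0) - (if w (idx n k) = x then (1 : ℝ) else 0)) := by
  have hI : w (idx n i) = x ↔ w⁻¹ x = idx n i := by rw [Equiv.Perm.inv_eq_iff_eq, eq_comm]
  have hK : w (idx n k) = x ↔ w⁻¹ x = idx n k := by rw [Equiv.Perm.inv_eq_iff_eq, eq_comm]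
  simp only [wAct, hatr, he, tr, mul_inv_rev, Equiv.swap_inv, Equiv.Perm.mul_apply, hI, hK]
  generalize w⁻¹ x = y
  by_cases h₁ : y = idx n i
  · subst h₁
    simp only [Equiv.swap_apply_left, ↓reduceIte, hne, sub_zero, mul_one]
    ring
  by_cases h₂ : y = idx n k
  · subst h₂
    simp only [Equiv.swap_apply_right, ↓reduceIte, Ne.symm hne, zero_sub, mul_neg, mul_one]
    ring
  simp [Equiv.swap_apply_of_ne_of_ne h₁ h₂, h₁, h₂]

lemma contentVec_fmap_empty (hlam : AntitoneOn lam (Set.Icc 1 n)) (hzero : lam n = 0)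
    (w : Equiv.Perm (Fin n)) (x : Fin n) :
    contentVec n lam (fmap n lam w ∅) x = wAct w (muT n lam ∅) x := by
  have hrow : (cells n lam).filter (fun c => fmap n lam w ∅ c = x.val + 1) =
      (cells n lam).filter (fun c => c.1 = (w⁻¹ x).val + 1 ∧ 1 ≤ c.2) := by
    refine Finset.filter_congr fun c hc => ?_
    have hc' := mem_cells.mp hc
    rw [fmap_of_forall_tag_le w hc (by simp), pv_eq_iff, ← Equiv.Perm.eq_inv_iff_eq,
      Fin.ext_iff, idx_val hc'.1 (by omega)]
    omega
  rw [contentVec, hrow, card_cells_filter_row hlam hzero (by omega) (by omega) le_rfl]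
  simp [wAct, muT]

lemma contentVec_fmap_insert (hlam : AntitoneOn lam (Set.Icc 1 n)) (hzero : lam n = 0)
    {s : Finset ℕ} {a j₀ i k : ℕ} (hs : ∀ x ∈ s, a < x)
    (hsub : insert a s ⊆ Finset.range (lamChain n lam).length)
    (he : (lamChain n lam).getD a (0, 0, 0) = (j₀, i, k)) (w : Equiv.Perm (Fin n)) (x : Fin n) :
    contentVec n lam (fmap n lam w (insert a s)) x =
      contentVec n lam (fmap n lam (w * tr n i k) s) x + (lcount (lamChain n lam) a : ℝ) *
        ((if w (idx n i) = x then (1 : ℝ) else 0) - (if w (idx n k) = x then (1 : ℝ) else 0)) := by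
  have hpos : ∀ ρ ∈ insert a s, ρ < (lamChain n lam).length := fun ρ hρ =>
    Finset.mem_range.mp (hsub hρ)
  have ha := hpos a (Finset.mem_insert_self a s)
  obtain ⟨hj₀, -, hi, hij, hk, hkn⟩ := lamChain_getD_bounds ha he
  have hin : i ≤ n - 1 := hij.trans conj_le_pred
  have htag : ∀ ρ ∈ insert a s, ((lamChain n lam).getD ρ (0, 0, 0)).1 ≤ j₀ := fun ρ hρ => by
    simpa only [he] using
      lamChain_tag_le (hpos ρ hρ) ((Finset.mem_insert.mp hρ).elim (·.ge) fun h => (hs ρ h).le)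
  have hout : ∀ c ∈ cells n lam, ¬ (c.1 = i ∧ j₀ ≤ c.2) →
      fmap n lam w (insert a s) c = fmap n lam (w * tr n i k) s c := by
    intro c hc hR
    by_cases hcol : c.2 < j₀
    · exact fmap_insert_of_lt w hs he hcol
    have hc' := mem_cells.mp hc
    have hck : c.1 ≤ conj n lam j₀ := (le_conj_iff hlam hc'.1 hc'.2.1).mpr (by omega)
    rw [fmap_of_forall_tag_le w hc fun ρ hρ => (htag ρ hρ).trans (by omega),
      fmap_of_forall_tag_le _ hc fun ρ hρ => (htag ρ (Finset.mem_insert_of_mem hρ)).trans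
        (by omega), pv, pv, tr, Equiv.Perm.mul_apply, Equiv.swap_apply_of_ne_of_ne]
    · exact fun h => hR ⟨(idx_inj hc'.1 (by omega) hi (by omega)).mp h, by omega⟩
    · exact fun h => by have := (idx_inj hc'.1 (by omega) (by omega) hkn).mp h; omega
  have hrow : ∀ c ∈ (cells n lam).filter (fun c => c.1 = i ∧ j₀ ≤ c.2),
      fmap n lam w (insert a s) c = pv w i ∧ fmap n lam (w * tr n i k) s c = pv w k := by
    intro c hc
    obtain ⟨hcell, hci, hjc⟩ := Finset.mem_filter.mp hc
    rw [fmap_of_forall_tag_le w hcell fun ρ hρ => (htag ρ hρ).trans hjc,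
      fmap_of_forall_tag_le _ hcell fun ρ hρ => (htag ρ (Finset.mem_insert_of_mem hρ)).trans hjc,
      hci, pv, pv, tr, Equiv.Perm.mul_apply, Equiv.swap_apply_left]
    exact ⟨rfl, rfl⟩
  rw [contentVec_eq_of_refill _ hout (fun c hc => (hrow c hc).1) (fun c hc => (hrow c hc).2),
    card_cells_filter_row hlam hzero hi (by omega) (by omega), ← lcount_lamChain hlam ha he]
  simp only [pv_eq_iff]

theorem contentVec_fmap_eq_wAct_muT (hlam : AntitoneOn lam (Set.Icc 1 n)) (hzero : lam n = 0)
    (J : Finset ℕ) (hJ : J ⊆ Finset.range (lamChain n lam).length) (w : Equiv.Perm (Fin n)) :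
    contentVec n lam (fmap n lam w J) = wAct w (muT n lam J) := by
  induction J using Finset.induction_on_min generalizing w with
  | empty => exact funext (contentVec_fmap_empty hlam hzero w)
  | insert a s hs ih =>
    funext x
    obtain ⟨j₀, i, k, he⟩ : ∃ j₀ i k, (lamChain n lam).getD a (0, 0, 0) = (j₀, i, k) :=
      ⟨_, _, _, rfl⟩
    have ha : a < (lamChain n lam).length := Finset.mem_range.mp (hJ (Finset.mem_insert_self a s))
    obtain ⟨-, -, hi, hij, hk, hkn⟩ := lamChain_getD_bounds ha he
    have hin : i ≤ n - 1 := hij.trans conj_le_pred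
    have hne : idx n i ≠ idx n k := by
      rw [Ne, idx_inj hi (by omega) (by omega) hkn]
      omega
    rw [contentVec_fmap_insert hlam hzero hs hJ he, muT_insert_of_forall_lt hs,
      wAct_hatr _ he hne, ih ((Finset.subset_insert a s).trans hJ)]

end Fillings

theorem content_eq_w_mu_general (n : ℕ) [NeZero n] (lam : ℕ → ℕ)
    (hreg : ∀ i, 1 ≤ i → i < n → lam (i + 1) < lam i) (hzero : lam n = 0)
    (w : Equiv.Perm (Fin n)) (J : Finset ℕ)
    (hJ : J ⊆ Finset.range (lamChain n lam).length) :
    (∃ c : ℝ, ∀ x : Fin n,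
        contentVec n lam (fmap n lam w J) x = wAct w (muT n lam J) x + c) ∧
      ∀ (w' : Equiv.Perm (Fin n)) (J' : Finset ℕ),
        J' ⊆ Finset.range (lamChain n lam).length →
          (∀ u ∈ cells n lam, fmap n lam w' J' u = fmap n lam w J u) →
            ∃ c : ℝ, ∀ x : Fin n,
              wAct w' (muT n lam J') x = wAct w (muT n lam J) x + c := by
  have hcontent := contentVec_fmap_eq_wAct_muT (antitoneOn_of_regular hreg) hzero
  refine ⟨⟨0, fun x => by rw [hcontent J hJ w, add_zero]⟩, fun w' J' hJ' hfill => ⟨0, fun x => ?_⟩⟩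
  rw [add_zero, ← hcontent J' hJ' w', ← hcontent J hJ w, contentVec_congr hfill]

/-- For every `w ∈ S_n` and every subsequence `T` of the λ-chain `Γ`, the
content vector of `f(w,T)` is congruent to `w(μ(T))` modulo the line `ℝ(1,…,1) ⊆ ℝⁿ`.
In particular, `w(μ(T))` (mod the line) depends only on the filling `f(w,T)`. -/
theorem content_eq_w_mu (n : ℕ) [NeZero n] (hn : 2 ≤ n) (lam : ℕ → ℕ)
    (hreg : ∀ i, 1 ≤ i → i < n → lam (i + 1) < lam i) (hzero : lam n = 0)
    (w : Equiv.Perm (Fin n)) (J : Finset ℕ)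
    (hJ : J ⊆ Finset.range (lamChain n lam).length) :
    (∃ c : ℝ, ∀ x : Fin n,
        contentVec n lam (fmap n lam w J) x = wAct w (muT n lam J) x + c) ∧
      ∀ (w' : Equiv.Perm (Fin n)) (J' : Finset ℕ),
        J' ⊆ Finset.range (lamChain n lam).length →
          (∀ u ∈ cells n lam, fmap n lam w' J' u = fmap n lam w J u) →
            ∃ c : ℝ, ∀ x : Fin n,
              wAct w' (muT n lam J') x = wAct w (muT n lam J) x + c :=
  content_eq_w_mu_general n lam hreg hzero w J hJ

end Compress
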